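/- arXiv:1408.4765 — 3 statements merged into one kernel-verified Lean document; each statement's English description precedes it below -/
import Mathlib

section
/- If (X,d) is an unbounded metric space, p ∈ X, and φ : X \ {p} → X \ {p} is an L-metric inversion (i.e., d(φ(x),φ(y)) is within a multiplicative factor L of d(x,y)/(d(x,p)d(y,p)) for all x,y ≠ p), then φ is a metrically L²-quasiconformal map on X \ {p}: for every x ≠ p, limsup_{r→0} of sup{d(φ(x),φ(y)) : d(x,y) ≤ r} / inf{d(φ(x),φ(z)) : d(x,z) ≥ r} is at most L². -/
open Filter Set

/-- An `L`-metric inversion on `X \ {p}` is metrically `L²`-quasiconformal: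
for every `x ≠ p`, the limsup as `r → 0⁺` of
`sup {d(φx, φy) : d(x,y) ≤ r} / inf {d(φx, φz) : d(x,z) ≥ r}` is at most `L²`. -/
theorem metric_inversion_is_quasiconformal
    {X : Type*} [MetricSpace X]
    (hX : ¬ Bornology.IsBounded (Set.univ : Set X))
    (p : X) (L : ℝ) (hL : 1 ≤ L)
    (φ : X → X)
    (hbij : Set.BijOn φ {x | x ≠ p} {x | x ≠ p})
    (hφ : ∀ x y, x ≠ p → y ≠ p →
      L⁻¹ * (dist x y / (dist x p * dist y p)) ≤ dist (φ x) (φ y) ∧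
      dist (φ x) (φ y) ≤ L * (dist x y / (dist x p * dist y p))) :
    ∀ x, x ≠ p →
      Filter.limsup
        (fun r : ℝ =>
          sSup {t : ℝ | ∃ y, y ≠ p ∧ dist x y ≤ r ∧ t = dist (φ x) (φ y)} /
          sInf {t : ℝ | ∃ z, z ≠ p ∧ r ≤ dist x z ∧ t = dist (φ x) (φ z)})
        (nhdsWithin 0 (Set.Ioi (0 : ℝ))) ≤ L ^ 2 := by
  intro x hx
  have hD0 : 0 < dist x p := dist_pos.mpr hx
  set D := dist x p with hDdef
  have hL0 : (0 : ℝ) < L := lt_of_lt_of_le one_pos hL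
  set F := fun r : ℝ =>
          sSup {t : ℝ | ∃ y, y ≠ p ∧ dist x y ≤ r ∧ t = dist (φ x) (φ y)} /
          sInf {t : ℝ | ∃ z, z ≠ p ∧ r ≤ dist x z ∧ t = dist (φ x) (φ z)} with hF
  have hFnonneg : ∀ r : ℝ, 0 ≤ F r := by
    intro r
    apply div_nonneg
    · exact Real.sSup_nonneg (fun t ht => by obtain ⟨y, _, _, rfl⟩ := ht; exact dist_nonneg)
    · exact Real.sInf_nonneg (fun t ht => by obtain ⟨z, _, _, rfl⟩ := ht; exact dist_nonneg)
  have hcobdd : IsCoboundedUnder (· ≤ ·) (nhdsWithin 0 (Set.Ioi (0:ℝ))) F :=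
    isCoboundedUnder_le_of_eventually_le _ (Eventually.of_forall hFnonneg)
  refine le_of_forall_pos_le_add (fun ε hε => ?_)
  have hr₀pos : 0 < min (D/2) (ε * D / (4 * L^2)) := by
    apply lt_min (by linarith)
    positivity
  set r₀ := min (D/2) (ε * D / (4 * L^2)) with hr₀
  refine limsup_le_of_le hcobdd ?_
  have hmem : Set.Ioc (0:ℝ) r₀ ∈ nhdsWithin 0 (Set.Ioi (0:ℝ)) :=
    Ioc_mem_nhdsGT_of_mem ⟨le_refl 0, hr₀pos⟩
  filter_upwards [hmem] with r hr
  obtain ⟨hr0, hrr₀⟩ := hr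
  have hrD2 : r ≤ D / 2 := hrr₀.trans (min_le_left _ _)
  have hrε : r ≤ ε * D / (4 * L^2) := hrr₀.trans (min_le_right _ _)
  have hDr : 0 < D - r := by linarith
  -- upper bound on the sup
  have hsup : sSup {t : ℝ | ∃ y, y ≠ p ∧ dist x y ≤ r ∧ t = dist (φ x) (φ y)}
      ≤ L * (r / (D * (D - r))) := by
    refine Real.sSup_le (fun t ht => ?_) (by positivity)
    obtain ⟨y, hy, hxy, rfl⟩ := ht
    have hyp : D - r ≤ dist y p := by
      have htri := dist_triangle x y p
      have : dist x p ≤ dist x y + dist y p := htri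
      linarith
    refine (hφ x y hx hy).2.trans ?_
    refine mul_le_mul_of_nonneg_left ?_ hL0.le
    exact div_le_div₀ hr0.le hxy (by positivity)
      (mul_le_mul_of_nonneg_left hyp hD0.le)
  -- the inf set is nonempty
  have hTne : ∃ z, z ≠ p ∧ r ≤ dist x z := by
    by_contra h
    push_neg at h
    apply hX
    rw [Metric.isBounded_iff_subset_closedBall x]
    refine ⟨max r D, fun z _ => ?_⟩
    simp only [Metric.mem_closedBall]
    rw [dist_comm]
    rcases eq_or_ne z p with rfl | hz
    · exact le_max_right r D
    · exact (h z hz).le.trans (le_max_left _ _)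
  -- lower bound on the inf
  have hinf : L⁻¹ * (r / (D * (D + r)))
      ≤ sInf {t : ℝ | ∃ z, z ≠ p ∧ r ≤ dist x z ∧ t = dist (φ x) (φ z)} := by
    obtain ⟨z₀, hz₀, hrz₀⟩ := hTne
    refine le_csInf ⟨dist (φ x) (φ z₀), z₀, hz₀, hrz₀, rfl⟩ (fun t ht => ?_)
    obtain ⟨z, hz, hxz, rfl⟩ := ht
    have hzp0 : 0 < dist z p := dist_pos.mpr hz
    refine le_trans ?_ (hφ x z hx hz).1
    refine mul_le_mul_of_nonneg_left ?_ (by positivity)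
    rw [div_le_div_iff₀ (by positivity) (by positivity)]
    have hzp : dist z p ≤ D + dist x z := by
      have := dist_triangle z x p
      rw [dist_comm z x] at this
      linarith
    rw [← hDdef]
    nlinarith [mul_le_mul_of_nonneg_left hzp (by positivity : (0:ℝ) ≤ r * D),
      mul_le_mul_of_nonneg_right hxz (by positivity : (0:ℝ) ≤ D * D),
      mul_le_mul_of_nonneg_right hxz (mul_nonneg hD0.le hr0.le)]
  have hinfpos : 0 < L⁻¹ * (r / (D * (D + r))) := by positivity
  -- combine
  have hFle : F r ≤ (L * (r / (D * (D - r)))) / (L⁻¹ * (r / (D * (D + r)))) :=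
    div_le_div₀ (by positivity) hsup hinfpos hinf
  refine hFle.trans ?_
  have heq : (L * (r / (D * (D - r)))) / (L⁻¹ * (r / (D * (D + r))))
      = L ^ 2 * ((D + r) / (D - r)) := by
    field_simp
  rw [heq]
  have h4 : r * (4 * L ^ 2) ≤ ε * D := by
    rwa [le_div_iff₀ (by positivity : (0:ℝ) < 4 * L ^ 2)] at hrε
  rw [mul_div_assoc', div_le_iff₀ hDr]
  nlinarith [mul_le_mul_of_nonneg_left hrD2 hε.le]
end

section
/- A strongly quasimöbius homeomorphism between bounded metric spaces is bi-Lipschitz: if X and Y are bounded metric spaces (each with at least two points) and f : X → Y is a surjective θ-quasimöbius map with θ(t) = C·t, then f is L-bi-Lipschitz for some L depending only on C, diam(X), diam(Y), and the distances realized by a fixed pair of points. -/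
/-- The metric cross ratio of four points. -/
noncomputable def crossRatio {X : Type*} [MetricSpace X] (x y z w : X) : ℝ :=
  dist x y * dist z w / (dist x z * dist y w)

/-- Key lemma: a map satisfying the two-sided strong quasimöbius product inequality
into a bounded space, with two marked points and a third point, is Lipschitz. -/
private lemma qm_upper_bound {X Y : Type*} [MetricSpace X] [MetricSpace Y]
    (DY : ℝ) (hDY : ∀ p q : Y, dist p q ≤ DY)
    (f : X → Y) (hinj : Function.Injective f)
    (a b : X) (hab : a ≠ b)
    (e : X) (hea : e ≠ a) (heb : e ≠ b)
    (C : ℝ) (hC : 1 ≤ C)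
    (H : ∀ x y z w : X, x ≠ y → x ≠ z → x ≠ w → y ≠ z → y ≠ w → z ≠ w →
      dist (f x) (f y) * dist (f z) (f w) * (dist x z * dist y w) ≤
        C * (dist (f x) (f z) * dist (f y) (f w)) * (dist x y * dist z w)) :
    ∃ K : ℝ, 0 < K ∧ ∀ x y : X, dist (f x) (f y) ≤ K * dist x y := by
  have hC0 : (0:ℝ) < C := lt_of_lt_of_le one_pos hC
  have hs : 0 < dist a b := dist_pos.2 hab
  have ht : 0 < dist (f a) (f b) := dist_pos.2 (fun h => hab (hinj h))
  by_contra hcon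
  push_neg at hcon
  -- Step A : arbitrarily large expansion anchored at a or b
  have stepA : ∀ M : ℝ, 1 ≤ M → ∃ u, u ≠ a ∧ u ≠ b ∧
      (M * dist u a ≤ dist (f u) (f a) ∨ M * dist u b ≤ dist (f u) (f b)) := by
    intro M hM
    have hM0 : (0:ℝ) < M := lt_of_lt_of_le one_pos hM
    obtain ⟨R, hRdef⟩ : ∃ r : ℝ,
        r = C * M ^ 2 * dist a b / dist (f a) (f b) + M + dist (f a) (f b) / dist a b := ⟨_, rfl⟩
    have hR1 : 0 ≤ C * M ^ 2 * dist a b / dist (f a) (f b) := by positivity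
    have hR2 : 0 ≤ dist (f a) (f b) / dist a b := by positivity
    have hRpos : 0 < R := by rw [hRdef]; linarith
    have hRM : M ≤ R := by rw [hRdef]; linarith
    have hRt : C * M ^ 2 * dist a b ≤ R * dist (f a) (f b) := by
      have h1 : C * M ^ 2 * dist a b / dist (f a) (f b) ≤ R := by rw [hRdef]; linarith
      exact (div_le_iff₀ ht).mp h1
    have hRs : dist (f a) (f b) ≤ R * dist a b := by
      have h1 : dist (f a) (f b) / dist a b ≤ R := by rw [hRdef]; linarith
      exact (div_le_iff₀ hs).mp h1
    obtain ⟨x, y, hxy⟩ := hcon R hRpos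
    have hxyne : x ≠ y := by
      rintro rfl
      simp [dist_self] at hxy
    by_cases hya : y = a
    · rw [hya] at hxy
      have hxa : x ≠ a := hya ▸ hxyne
      have hxb : x ≠ b := by
        intro hxeq
        rw [hxeq, dist_comm b a, dist_comm (f b) (f a)] at hxy
        linarith
      refine ⟨x, hxa, hxb, Or.inl ?_⟩
      have : M * dist x a ≤ R * dist x a := mul_le_mul_of_nonneg_right hRM dist_nonneg
      linarith
    by_cases hyb : y = b
    · rw [hyb] at hxy
      have hxb : x ≠ b := hyb ▸ hxyne
      have hxa : x ≠ a := by
        intro hxeq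
        rw [hxeq] at hxy
        linarith
      refine ⟨x, hxa, hxb, Or.inr ?_⟩
      have : M * dist x b ≤ R * dist x b := mul_le_mul_of_nonneg_right hRM dist_nonneg
      linarith
    by_cases hxa : x = a
    · rw [hxa] at hxy
      have hyane : y ≠ a := fun h => hxyne (h ▸ hxa.symm).symm
      refine ⟨y, hyane, hyb, Or.inl ?_⟩
      rw [dist_comm y a, dist_comm (f y) (f a)]
      have : M * dist a y ≤ R * dist a y := mul_le_mul_of_nonneg_right hRM dist_nonneg
      linarith
    by_cases hxb : x = b
    · rw [hxb] at hxy
      have hybne : y ≠ b := fun h => hxyne (h ▸ hxb.symm).symm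
      refine ⟨y, hya, hybne, Or.inr ?_⟩
      rw [dist_comm y b, dist_comm (f y) (f b)]
      have : M * dist b y ≤ R * dist b y := mul_le_mul_of_nonneg_right hRM dist_nonneg
      linarith
    -- generic case
    by_cases h1 : M * dist x a ≤ dist (f x) (f a)
    · exact ⟨x, hxa, hxb, Or.inl h1⟩
    by_cases h2 : M * dist y b ≤ dist (f y) (f b)
    · exact ⟨y, hya, hyb, Or.inr h2⟩
    exfalso
    push_neg at h1 h2
    have HH := H x y a b hxyne hxa hxb hya hyb hab
    have P1 : 0 < dist x y := dist_pos.2 hxyne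
    have P2 : 0 < dist x a := dist_pos.2 hxa
    have P3 : 0 < dist y b := dist_pos.2 hyb
    have A1 : R * dist x y * (dist (f a) (f b) * (dist x a * dist y b)) <
        dist (f x) (f y) * dist (f a) (f b) * (dist x a * dist y b) := by
      have := mul_lt_mul_of_pos_right hxy
        (show (0:ℝ) < dist (f a) (f b) * (dist x a * dist y b) by positivity)
      linarith
    have A2 : C * (dist (f x) (f a) * dist (f y) (f b)) * (dist x y * dist a b) <
        C * ((M * dist x a) * (M * dist y b)) * (dist x y * dist a b) := by
      have m1 : dist (f x) (f a) * dist (f y) (f b) < (M * dist x a) * (M * dist y b) :=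
        mul_lt_mul'' h1 h2 dist_nonneg dist_nonneg
      have m2 := mul_lt_mul_of_pos_right m1 (mul_pos P1 hs)
      have m3 := mul_lt_mul_of_pos_left m2 hC0
      linarith
    have A3 : C * M ^ 2 * dist a b * (dist x y * (dist x a * dist y b)) ≤
        R * dist (f a) (f b) * (dist x y * (dist x a * dist y b)) :=
      mul_le_mul_of_nonneg_right hRt (by positivity)
    nlinarith [HH, A1, A2, A3]
  -- Step B : pigeonhole
  have hQab : (∀ M : ℝ, ∃ u, u ≠ a ∧ u ≠ b ∧ M * dist u a ≤ dist (f u) (f a)) ∨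
      (∀ M : ℝ, ∃ u, u ≠ a ∧ u ≠ b ∧ M * dist u b ≤ dist (f u) (f b)) := by
    by_contra hno
    push_neg at hno
    obtain ⟨⟨M₁, hM₁⟩, ⟨M₂, hM₂⟩⟩ := hno
    obtain ⟨u, hua, hub, hor⟩ := stepA (max (max M₁ M₂) 1) (le_max_right _ _)
    rcases hor with h | h
    · have h' := hM₁ u hua hub
      have hm : M₁ * dist u a ≤ max (max M₁ M₂) 1 * dist u a :=
        mul_le_mul_of_nonneg_right (le_trans (le_max_left _ _) (le_max_left _ _)) dist_nonneg
      linarith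
    · have h' := hM₂ u hua hub
      have hm : M₂ * dist u b ≤ max (max M₁ M₂) 1 * dist u b :=
        mul_le_mul_of_nonneg_right (le_trans (le_max_right _ _) (le_max_left _ _)) dist_nonneg
      linarith
  -- Step C : contradiction from an anchored sequence
  have stepC : ∀ p q : X, p ≠ q → e ≠ p → e ≠ q →
      (∀ M : ℝ, ∃ u, u ≠ p ∧ u ≠ q ∧ M * dist u p ≤ dist (f u) (f p)) → False := by
    intro p q hpq hep heq hQ
    have hsp : 0 < dist p q := dist_pos.2 hpq
    have hfpq : 0 < dist (f p) (f q) := dist_pos.2 (fun h => hpq (hinj h))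
    have hDY0 : 0 < DY := lt_of_lt_of_le hfpq (hDY _ _)
    have hdep : 0 < dist e p := dist_pos.2 hep
    have hdpe : 0 < dist p e := dist_pos.2 (Ne.symm hep)
    have hfpe : 0 < dist (f p) (f e) := dist_pos.2 (fun h => hep (hinj h).symm)
    have hfqe : 0 < dist (f q) (f e) := dist_pos.2 (fun h => heq (hinj h).symm)
    have hfep : 0 < dist (f e) (f p) := dist_pos.2 (fun h => hep (hinj h))
    have hdqe : 0 < dist q e := dist_pos.2 (Ne.symm heq)
    obtain ⟨T1, hT1def⟩ : ∃ r : ℝ, r = 2 * DY / dist p q := ⟨_, rfl⟩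
    obtain ⟨T2, hT2def⟩ : ∃ r : ℝ, r = dist (f e) (f p) / dist e p := ⟨_, rfl⟩
    obtain ⟨T3, hT3def⟩ : ∃ r : ℝ, r = 2 * C * DY * (dist (f p) (f e) * dist q e) /
      (dist p q * (dist (f q) (f e) * dist p e)) := ⟨_, rfl⟩
    have hT1 : 0 ≤ T1 := by rw [hT1def]; positivity
    have hT2 : 0 ≤ T2 := by rw [hT2def]; positivity
    have hT3 : 0 ≤ T3 := by rw [hT3def]; positivity
    obtain ⟨M, hMdef⟩ : ∃ r : ℝ, r = T1 + T2 + T3 + 1 := ⟨_, rfl⟩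
    obtain ⟨u, hup, huq, hbig⟩ := hQ M
    have hdup : 0 < dist u p := dist_pos.2 hup
    have hue : u ≠ e := by
      intro hueq
      rw [hueq] at hbig
      have hc : T2 * dist e p = dist (f e) (f p) := by
        rw [hT2def]; exact div_mul_cancel₀ _ (ne_of_gt hdep)
      nlinarith [mul_nonneg hT1 hdep.le, mul_nonneg hT3 hdep.le]
    have hupDY : dist (f u) (f p) ≤ DY := hDY _ _
    have hduple : M * dist u p ≤ DY := le_trans hbig hupDY
    have hduq : dist p q / 2 ≤ dist u q := by
      by_contra hlt
      push_neg at hlt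
      have htri : dist p q ≤ dist p u + dist u q := dist_triangle p u q
      have hpu : dist p q / 2 < dist p u := by linarith
      have hcomm : dist u p = dist p u := dist_comm u p
      have hc : T1 * dist p q = 2 * DY := by
        rw [hT1def]; exact div_mul_cancel₀ _ (ne_of_gt hsp)
      nlinarith [mul_nonneg hT2 hdup.le, mul_nonneg hT3 hdup.le,
        mul_le_mul_of_nonneg_left hpu.le hT1]
    have HH := H u p q e hup huq hue hpq (Ne.symm hep) (Ne.symm heq)
    have hfuqDY : dist (f u) (f q) ≤ DY := hDY _ _
    have B1 : M * dist u p * (dist (f q) (f e) * (dist p q / 2 * dist p e)) ≤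
        dist (f u) (f p) * dist (f q) (f e) * (dist u q * dist p e) := by
      have h2 : dist p q / 2 * dist p e ≤ dist u q * dist p e :=
        mul_le_mul_of_nonneg_right hduq dist_nonneg
      have h3 : M * dist u p * (dist p q / 2 * dist p e) ≤
          dist (f u) (f p) * (dist u q * dist p e) :=
        mul_le_mul hbig h2 (by positivity) dist_nonneg
      have h4 := mul_le_mul_of_nonneg_right h3 hfqe.le
      linarith [h4]
    have B2 : C * (dist (f u) (f q) * dist (f p) (f e)) * (dist u p * dist q e) ≤
        C * (DY * dist (f p) (f e)) * (dist u p * dist q e) := by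
      have h1 : dist (f u) (f q) * dist (f p) (f e) ≤ DY * dist (f p) (f e) :=
        mul_le_mul_of_nonneg_right hfuqDY dist_nonneg
      have h2 : C * (dist (f u) (f q) * dist (f p) (f e)) ≤ C * (DY * dist (f p) (f e)) :=
        mul_le_mul_of_nonneg_left h1 hC0.le
      exact mul_le_mul_of_nonneg_right h2 (by positivity)
    have chain : M * dist u p * (dist (f q) (f e) * (dist p q / 2 * dist p e)) ≤
        C * (DY * dist (f p) (f e)) * (dist u p * dist q e) :=
      le_trans B1 (le_trans HH B2)
    have hc3 : T3 * (dist p q * (dist (f q) (f e) * dist p e)) =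
        2 * C * DY * (dist (f p) (f e) * dist q e) := by
      rw [hT3def]
      exact div_mul_cancel₀ _ (by positivity)
    have hT3D : T3 * (dist (f q) (f e) * (dist p q / 2 * dist p e)) =
        C * DY * (dist (f p) (f e) * dist q e) := by
      have h2 : dist p q * (dist (f q) (f e) * dist p e) =
          2 * (dist (f q) (f e) * (dist p q / 2 * dist p e)) := by ring
      rw [h2] at hc3
      linarith
    have hT3D2 : T3 * (dist (f q) (f e) * (dist p q / 2 * dist p e)) * dist u p =
        C * DY * (dist (f p) (f e) * dist q e) * dist u p := by rw [hT3D]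
    have hpos1 : 0 ≤ (T1 + T2) * (dist u p * (dist (f q) (f e) * (dist p q / 2 * dist p e))) :=
      mul_nonneg (by linarith) (by positivity)
    have hpos2 : 0 < dist u p * (dist (f q) (f e) * (dist p q / 2 * dist p e)) := by positivity
    rw [hMdef] at chain
    linarith only [chain, hT3D2, hpos1, hpos2]
  rcases hQab with h | h
  · exact stepC a b hab hea heb h
  · exact stepC b a hab.symm heb hea (fun M => by
      obtain ⟨u, h1, h2, h3⟩ := h M
      exact ⟨u, h2, h1, h3⟩)

/-- A strongly quasimöbius homeomorphism between bounded metric spaces is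
bi-Lipschitz, with a constant depending only on the data. -/
theorem stronglyQuasimobius_biLipschitz_of_bounded
    {X Y : Type*} [MetricSpace X] [MetricSpace Y]
    (hXb : Bornology.IsBounded (Set.univ : Set X))
    (hYb : Bornology.IsBounded (Set.univ : Set Y))
    (a b : X) (hab : a ≠ b)
    (f : X → Y) (hfbij : Function.Bijective f)
    (C : ℝ) (hC : 1 ≤ C)
    (hqm : ∀ x y z w : X, x ≠ y → x ≠ z → x ≠ w → y ≠ z → y ≠ w → z ≠ w →
      crossRatio (f x) (f y) (f z) (f w) ≤ C * crossRatio x y z w) :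
    ∃ L : ℝ, 1 ≤ L ∧
      ∀ x y : X, L⁻¹ * dist x y ≤ dist (f x) (f y) ∧ dist (f x) (f y) ≤ L * dist x y := by
  classical
  obtain ⟨g, hgf, hfg⟩ := Function.bijective_iff_has_inverse.mp hfbij
  have hinj := hfbij.injective
  have hginj : Function.Injective g := fun u v h => by rw [← hfg u, ← hfg v, h]
  have hfab : f a ≠ f b := hinj.ne hab
  obtain ⟨DX, hDX0⟩ := Metric.isBounded_iff.mp hXb
  have hDX : ∀ p q : X, dist p q ≤ DX := fun p q => hDX0 (Set.mem_univ p) (Set.mem_univ q)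
  obtain ⟨DY, hDY0⟩ := Metric.isBounded_iff.mp hYb
  have hDY : ∀ p q : Y, dist p q ≤ DY := fun p q => hDY0 (Set.mem_univ p) (Set.mem_univ q)
  have hs : 0 < dist a b := dist_pos.2 hab
  have ht : 0 < dist (f a) (f b) := dist_pos.2 hfab
  -- product form of the quasimöbius hypothesis
  have Hf : ∀ x y z w : X, x ≠ y → x ≠ z → x ≠ w → y ≠ z → y ≠ w → z ≠ w →
      dist (f x) (f y) * dist (f z) (f w) * (dist x z * dist y w) ≤
        C * (dist (f x) (f z) * dist (f y) (f w)) * (dist x y * dist z w) := by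
    intro x y z w h1 h2 h3 h4 h5 h6
    have hq := hqm x y z w h1 h2 h3 h4 h5 h6
    have pB : 0 < dist (f x) (f z) * dist (f y) (f w) :=
      mul_pos (dist_pos.2 (hinj.ne h2)) (dist_pos.2 (hinj.ne h5))
    have pD : 0 < dist x z * dist y w := mul_pos (dist_pos.2 h2) (dist_pos.2 h5)
    unfold crossRatio at hq
    rw [← mul_div_assoc] at hq
    have := (div_le_div_iff₀ pB pD).mp hq
    linarith [this]
  by_cases h3 : ∃ e : X, e ≠ a ∧ e ≠ b
  · obtain ⟨e, hea, heb⟩ := h3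
    obtain ⟨K₁, hK₁pos, hK₁⟩ := qm_upper_bound DY hDY f hinj a b hab e hea heb C hC Hf
    have Hg : ∀ x y z w : Y, x ≠ y → x ≠ z → x ≠ w → y ≠ z → y ≠ w → z ≠ w →
        dist (g x) (g y) * dist (g z) (g w) * (dist x z * dist y w) ≤
          C * (dist (g x) (g z) * dist (g y) (g w)) * (dist x y * dist z w) := by
      intro x y z w h1 h2 h3' h4 h5 h6
      have key := Hf (g x) (g z) (g y) (g w) (hginj.ne h2) (hginj.ne h1) (hginj.ne h3')
        (hginj.ne (Ne.symm h4)) (hginj.ne h6) (hginj.ne h5)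
      rw [hfg x, hfg y, hfg z, hfg w] at key
      linarith [key]
    obtain ⟨K₂, hK₂pos, hK₂⟩ := qm_upper_bound DX hDX g hginj (f a) (f b) hfab
      (f e) (hinj.ne hea) (hinj.ne heb) C hC Hg
    set L : ℝ := max (max K₁ K₂) 1 with hLdef
    have hL0 : (0:ℝ) < L := lt_of_lt_of_le one_pos (le_max_right _ _)
    refine ⟨L, le_max_right _ _, fun x y => ?_⟩
    constructor
    · have h := hK₂ (f x) (f y)
      rw [hgf x, hgf y] at h
      have h2 : dist x y ≤ L * dist (f x) (f y) :=
        le_trans h (mul_le_mul_of_nonneg_right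
          (le_trans (le_max_right K₁ K₂) (le_max_left _ 1)) dist_nonneg)
      calc L⁻¹ * dist x y ≤ L⁻¹ * (L * dist (f x) (f y)) :=
            mul_le_mul_of_nonneg_left h2 (inv_nonneg.2 hL0.le)
        _ = dist (f x) (f y) := by field_simp
    · exact le_trans (hK₁ x y) (mul_le_mul_of_nonneg_right
        (le_trans (le_max_left K₁ K₂) (le_max_left _ 1)) dist_nonneg)
  · push_neg at h3
    have key : ∀ z : X, z = a ∨ z = b := fun z => by
      by_cases h : z = a
      · exact Or.inl h
      · exact Or.inr (h3 z h)
    set L : ℝ := max (max (dist (f a) (f b) / dist a b) (dist a b / dist (f a) (f b))) 1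
      with hLdef
    have hL0 : (0:ℝ) < L := lt_of_lt_of_le one_pos (le_max_right _ _)
    have hts : dist (f a) (f b) ≤ L * dist a b := by
      have h1 : dist (f a) (f b) / dist a b ≤ L :=
        le_trans (le_max_left _ _) (le_max_left _ 1)
      exact (div_le_iff₀ hs).mp h1
    have hst : L⁻¹ * dist a b ≤ dist (f a) (f b) := by
      have h1 : dist a b / dist (f a) (f b) ≤ L :=
        le_trans (le_max_right _ _) (le_max_left _ 1)
      have h2 : dist a b ≤ L * dist (f a) (f b) := (div_le_iff₀ ht).mp h1
      calc L⁻¹ * dist a b ≤ L⁻¹ * (L * dist (f a) (f b)) :=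
            mul_le_mul_of_nonneg_left h2 (inv_nonneg.2 hL0.le)
        _ = dist (f a) (f b) := by field_simp
    refine ⟨L, le_max_right _ _, fun x y => ?_⟩
    rcases key x with hx | hx <;> rcases key y with hy | hy
    · rw [hx, hy]; simp [dist_self]
    · rw [hx, hy]; exact ⟨hst, hts⟩
    · rw [hx, hy, dist_comm b a, dist_comm (f b) (f a)]; exact ⟨hst, hts⟩
    · rw [hx, hy]; simp [dist_self]
end

section
/- Let (X,d) be an unbounded metric space, p ∈ X, and let d_p be an inversion distance on X \ {p} with d_p(x,y) ≍₄ d(x,y)/(d(x,p)d(y,p)). Then the identity map id : (X \ {p}, d) → (X \ {p}, d_p) is 16t-quasimöbius: for any quadruple of distinct points x,y,z,w ∈ X \ {p}, cr_{d_p}(x,y,z,w) ≤ 16·cr_d(x,y,z,w). -/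
/-- The identity map from `(X \ {p}, d)` to `(X \ {p}, d_p)` is `16t`-quasimöbius:
cross ratios computed in the inversion distance `d_p` are at most `16` times
cross ratios computed in `d`. -/
theorem inversion_identity_quasimobius
    {X : Type*} [MetricSpace X]
    (hX : ¬ Bornology.IsBounded (Set.univ : Set X))
    (p : X) (dp : X → X → ℝ)
    (hdp : ∀ x y, x ≠ p → y ≠ p →
      (1/4) * (dist x y / (dist x p * dist y p)) ≤ dp x y ∧
      dp x y ≤ dist x y / (dist x p * dist y p)) :
    ∀ x y z w : X, x ≠ p → y ≠ p → z ≠ p → w ≠ p →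
      x ≠ y → x ≠ z → x ≠ w → y ≠ z → y ≠ w → z ≠ w →
      dp x y * dp z w / (dp x z * dp y w) ≤
        16 * (dist x y * dist z w / (dist x z * dist y w)) := by
  intro x y z w hxp hyp hzp hwp hxy hxz hxw hyz hyw hzw
  have hxp' : (0:ℝ) < dist x p := dist_pos.mpr hxp
  have hyp' : (0:ℝ) < dist y p := dist_pos.mpr hyp
  have hzp' : (0:ℝ) < dist z p := dist_pos.mpr hzp
  have hwp' : (0:ℝ) < dist w p := dist_pos.mpr hwp
  have hdxy : (0:ℝ) < dist x y := dist_pos.mpr hxy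
  have hdxz : (0:ℝ) < dist x z := dist_pos.mpr hxz
  have hdyw : (0:ℝ) < dist y w := dist_pos.mpr hyw
  have hdzw : (0:ℝ) < dist z w := dist_pos.mpr hzw
  obtain ⟨hxy1, hxy2⟩ := hdp x y hxp hyp
  obtain ⟨hzw1, hzw2⟩ := hdp z w hzp hwp
  obtain ⟨hxz1, hxz2⟩ := hdp x z hxp hzp
  obtain ⟨hyw1, hyw2⟩ := hdp y w hyp hwp
  have hxy0 : (0:ℝ) ≤ dp x y := le_trans (by positivity) hxy1
  have hzw0 : (0:ℝ) ≤ dp z w := le_trans (by positivity) hzw1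
  have hxz0 : (0:ℝ) < dp x z := lt_of_lt_of_le (by positivity) hxz1
  have hyw0 : (0:ℝ) < dp y w := lt_of_lt_of_le (by positivity) hyw1
  have hN : dp x y * dp z w ≤
      (dist x y / (dist x p * dist y p)) * (dist z w / (dist z p * dist w p)) :=
    mul_le_mul hxy2 hzw2 hzw0 (by positivity)
  have hD : (1/4) * (dist x z / (dist x p * dist z p)) *
      ((1/4) * (dist y w / (dist y p * dist w p))) ≤ dp x z * dp y w :=
    mul_le_mul hxz1 hyw1 (by positivity) hxz0.le
  have hD0 : (0:ℝ) < (1/4) * (dist x z / (dist x p * dist z p)) *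
      ((1/4) * (dist y w / (dist y p * dist w p))) := by positivity
  calc dp x y * dp z w / (dp x z * dp y w)
      ≤ ((dist x y / (dist x p * dist y p)) * (dist z w / (dist z p * dist w p))) /
        ((1/4) * (dist x z / (dist x p * dist z p)) *
          ((1/4) * (dist y w / (dist y p * dist w p)))) :=
        div_le_div₀ (by positivity) hN hD0 hD
    _ = 16 * (dist x y * dist z w / (dist x z * dist y w)) := by
        field_simp
        ring
end
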